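/- arXiv:2302.01477 — 4 statements merged into one kernel-verified Lean document; each statement's English description precedes it below -/
import Mathlib

section
/- Define learning rates α_t = (H+1)/(H+t) for t ≥ 1, and weights α_t^i = α_i · ∏_{j=i+1}^t (1 − α_j) for 1 ≤ i ≤ t. Then for every t ≥ 1: 1/√t ≤ ∑_{i=1}^t α_t^i/√i ≤ 2/√t. -/
/-- Learning rate `α_t = (H+1)/(H+t)`. -/
noncomputable def lr (H t : ℕ) : ℝ := (H + 1) / (H + t)

/-- Weight `α_t^i = α_i ∏_{j=i+1}^t (1 - α_j)`. -/
noncomputable def lrW (H t i : ℕ) : ℝ :=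
  lr H i * ∏ j ∈ Finset.Icc (i + 1) t, (1 - lr H j)

/-!
Every `α`-weighted average `S_t = ∑_{i ≤ t} α_t^i f(i)` obeys the recursion
`S_{t+1} = (1 - α_{t+1}) S_t + α_{t+1} f(t+1)`. Since `α_1 = 1`, the weights sum to one, and the
lower bound follows from `1/√i ≥ 1/√t`. For the upper bound, `2/√t` is a supersolution of the
recursion with `f(i) = 1/√i`: after clearing denominators this is `2√t√(t+1) ≤ H + 2t + 1`,
which is AM–GM, `2√t√(t+1) ≤ t + (t+1)`.
-/

open Finset

lemma lr_nonneg (H t : ℕ) : 0 ≤ lr H t := by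
  unfold lr
  positivity

lemma lr_le_one (H : ℕ) {t : ℕ} (ht : 1 ≤ t) : lr H t ≤ 1 :=
  div_le_one_of_le₀ (by gcongr; exact_mod_cast ht) (by positivity)

lemma lr_one (H : ℕ) : lr H 1 = 1 := by
  unfold lr
  rw [Nat.cast_one, div_self (by positivity)]

lemma one_sub_lr_succ (H t : ℕ) : 1 - lr H (t + 1) = t / (H + t + 1) := by
  unfold lr
  field_simp
  push_cast
  ring

lemma lrW_nonneg (H t i : ℕ) : 0 ≤ lrW H t i := by
  refine mul_nonneg (lr_nonneg H i) (prod_nonneg fun j hj => ?_)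
  have hj : 1 ≤ j := by grind
  linarith [lr_le_one H hj]

lemma lrW_self (H t : ℕ) : lrW H t t = lr H t := by
  rw [lrW, Icc_eq_empty (by omega), prod_empty, mul_one]

lemma lrW_succ (H : ℕ) {t i : ℕ} (h : i ≤ t) :
    lrW H (t + 1) i = (1 - lr H (t + 1)) * lrW H t i := by
  rw [lrW, lrW, prod_Icc_succ_top (by omega)]
  ring

lemma sum_lrW_mul_succ (H t : ℕ) (f : ℕ → ℝ) :
    ∑ i ∈ Icc 1 (t + 1), lrW H (t + 1) i * f i =
      (1 - lr H (t + 1)) * ∑ i ∈ Icc 1 t, lrW H t i * f i + lr H (t + 1) * f (t + 1) := by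
  rw [sum_Icc_succ_top (by omega), lrW_self, mul_sum]
  congr 1
  refine sum_congr rfl fun i hi => ?_
  rw [lrW_succ H (mem_Icc.mp hi).2, mul_assoc]

lemma sum_lrW (H : ℕ) {t : ℕ} (ht : 1 ≤ t) : ∑ i ∈ Icc 1 t, lrW H t i = 1 := by
  induction t, ht using Nat.le_induction with
  | base => simp [lrW_self, lr_one]
  | succ t _ ih =>
    have h := sum_lrW_mul_succ H t fun _ => 1
    simp only [mul_one] at h
    rw [h, ih, mul_one, sub_add_cancel]

lemma lr_succ_step_le (H : ℕ) {t : ℕ} (ht : 1 ≤ t) :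
    (1 - lr H (t + 1)) * (2 / √t) + lr H (t + 1) * (√(t + 1 : ℕ))⁻¹ ≤ 2 / √(t + 1 : ℕ) := by
  rw [one_sub_lr_succ, lr]
  push_cast
  have ht' : (1 : ℝ) ≤ t := by exact_mod_cast ht
  set a := √(t : ℝ)
  set b := √((t : ℝ) + 1)
  have ha : 0 < a := Real.sqrt_pos.2 (by linarith)
  have hb : 0 < b := Real.sqrt_pos.2 (by linarith)
  have ha2 : a ^ 2 = t := Real.sq_sqrt (by linarith)
  have hb2 : b ^ 2 = t + 1 := Real.sq_sqrt (by linarith)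
  have am_gm : 2 * a * b ≤ 2 * t + 1 := by nlinarith [two_mul_le_add_sq a b]
  have key : 2 * t * b + (H + 1) * a ≤ 2 * (H + t + 1) * a := by
    nlinarith [mul_le_mul_of_nonneg_left am_gm ha.le, (H.cast_nonneg : (0 : ℝ) ≤ H)]
  calc (t : ℝ) / (H + t + 1) * (2 / a) + (H + 1) / (H + (t + 1)) * b⁻¹
      = (2 * t * b + (H + 1) * a) / ((H + t + 1) * a * b) := by field_simp; ring
    _ ≤ 2 * (H + t + 1) * a / ((H + t + 1) * a * b) := by gcongr
    _ = 2 / b := by field_simp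

lemma sum_lrW_div_sqrt_le (H : ℕ) {t : ℕ} (ht : 1 ≤ t) :
    ∑ i ∈ Icc 1 t, lrW H t i / √i ≤ 2 / √t := by
  simp only [div_eq_mul_inv (lrW _ _ _)]
  induction t, ht using Nat.le_induction with
  | base => simp [lrW_self, lr_one]
  | succ t ht ih =>
    rw [sum_lrW_mul_succ H t fun i => (√i)⁻¹]
    calc (1 - lr H (t + 1)) * ∑ i ∈ Icc 1 t, lrW H t i * (√i)⁻¹ + lr H (t + 1) * (√(t + 1 : ℕ))⁻¹
        ≤ (1 - lr H (t + 1)) * (2 / √t) + lr H (t + 1) * (√(t + 1 : ℕ))⁻¹ := by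
          gcongr
          linarith [lr_le_one H (Nat.le_add_left 1 t)]
      _ ≤ 2 / √(t + 1 : ℕ) := lr_succ_step_le H ht

lemma inv_sqrt_le_sum_lrW_div_sqrt (H : ℕ) {t : ℕ} (ht : 1 ≤ t) :
    1 / √t ≤ ∑ i ∈ Icc 1 t, lrW H t i / √i :=
  calc 1 / √t = ∑ i ∈ Icc 1 t, lrW H t i / √t := by rw [← sum_div, sum_lrW H ht]
    _ ≤ ∑ i ∈ Icc 1 t, lrW H t i / √i := by
      refine sum_le_sum fun i hi => ?_
      obtain ⟨hi1, hit⟩ := mem_Icc.mp hi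
      have hi1' : (0 : ℝ) < i := by exact_mod_cast hi1
      exact div_le_div_of_nonneg_left (lrW_nonneg H t i) (Real.sqrt_pos.2 hi1')
        (Real.sqrt_le_sqrt (by exact_mod_cast hit))

theorem stmt3_general (H : ℕ) (t : ℕ) (ht : 1 ≤ t) :
    1 / Real.sqrt t ≤ ∑ i ∈ Finset.Icc 1 t, lrW H t i / Real.sqrt i ∧
    ∑ i ∈ Finset.Icc 1 t, lrW H t i / Real.sqrt i ≤ 2 / Real.sqrt t :=
  ⟨inv_sqrt_le_sum_lrW_div_sqrt H ht, sum_lrW_div_sqrt_le H ht⟩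

theorem stmt3 (H : ℕ) (hH : 1 ≤ H) (t : ℕ) (ht : 1 ≤ t) :
    1 / Real.sqrt t ≤ ∑ i ∈ Finset.Icc 1 t, lrW H t i / Real.sqrt i ∧
    ∑ i ∈ Finset.Icc 1 t, lrW H t i / Real.sqrt i ≤ 2 / Real.sqrt t :=
  stmt3_general H t ht
end

section
/- Let A ⪯ B be d×d positive definite matrices (B − A positive semidefinite) and let x ∈ ℝ^d. Then xᵀ B⁻¹ x ≤ (det(B)/det(A)) · xᵀ A⁻¹ x. Consequently, √(xᵀ B⁻¹ x) / √(xᵀ A⁻¹ x) ≤ √(det(B)/det(A)). -/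
open Matrix

-- determinant monotonicity
open scoped MatrixOrder in
lemma det_mono_aux {d : ℕ} (A B : Matrix (Fin d) (Fin d) ℝ)
    (hA : A.PosDef) (hAB : (B - A).PosSemidef) : A.det ≤ B.det := by
  classical
  have hS := hA.posSemidef
  set S := CFC.sqrt A with hSdef
  have hSS : S * S = A := CFC.sqrt_mul_sqrt_self A hS.nonneg
  have hSh : S.IsHermitian := (CFC.sqrt_nonneg A).posSemidef.1
  have hdetA : 0 < A.det := hA.det_pos
  have hdS : S.det ≠ 0 := by
    intro h
    rw [← hSS, det_mul, h, mul_zero] at hdetA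
    exact lt_irrefl _ hdetA
  have hSu : IsUnit S.det := isUnit_iff_ne_zero.mpr hdS
  set M := S⁻¹ * B * S⁻¹ with hMdef
  have hinvH : (S⁻¹)ᴴ = S⁻¹ := by
    rw [conjTranspose_nonsing_inv, hSh.eq]
  have hM1 : (M - 1).PosSemidef := by
    have h := hAB.mul_mul_conjTranspose_same S⁻¹
    rw [hinvH] at h
    have heq : S⁻¹ * (B - A) * S⁻¹ = M - 1 := by
      rw [mul_sub, sub_mul, hMdef]
      congr 1
      rw [← hSS, ← mul_assoc, mul_assoc (S⁻¹ * S), nonsing_inv_mul S hSu,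
        mul_nonsing_inv S hSu, one_mul]
    rwa [heq] at h
  have hMh : M.IsHermitian := by
    have := hM1.1.add (isHermitian_one (n := Fin d) (α := ℝ))
    rwa [sub_add_cancel] at this
  have heig : ∀ i, 1 ≤ hMh.eigenvalues i := by
    intro i
    set v : Fin d → ℝ := ⇑(hMh.eigenvectorBasis i) with hv
    have hmv : M *ᵥ v = hMh.eigenvalues i • v := hMh.mulVec_eigenvectorBasis i
    have h0 : 0 ≤ star v ⬝ᵥ ((M - 1) *ᵥ v) := hM1.dotProduct_mulVec_nonneg v
    have hvne : v ≠ 0 := by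
      have := hMh.eigenvectorBasis.orthonormal.ne_zero i
      intro h
      apply this
      ext j
      exact congrFun h j
    have hvv : 0 < star v ⬝ᵥ v := by
      rcases lt_or_eq_of_le (dotProduct_star_self_nonneg v) with h | h
      · exact h
      · exact absurd (dotProduct_star_self_eq_zero.mp h.symm) hvne
    rw [sub_mulVec, one_mulVec, dotProduct_sub, hmv, dotProduct_smul,
      smul_eq_mul, sub_nonneg] at h0
    nlinarith [h0, hvv]
  have hdetM : 1 ≤ M.det := by
    rw [hMh.det_eq_prod_eigenvalues]
    calc (1 : ℝ) = ∏ _i : Fin d, (1 : ℝ) := by simp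
    _ ≤ ∏ i, hMh.eigenvalues i :=
      Finset.prod_le_prod (fun i _ => zero_le_one) (fun i _ => heig i)
  have hdetMeq : M.det = B.det / A.det := by
    rw [hMdef, det_mul, det_mul, det_nonsing_inv, Ring.inverse_eq_inv', ← hSS, det_mul]
    field_simp
  rw [hdetMeq] at hdetM
  calc A.det = A.det * 1 := (mul_one _).symm
  _ ≤ A.det * (B.det / A.det) := by
      exact mul_le_mul_of_nonneg_left hdetM (le_of_lt hdetA)
  _ = B.det := by field_simp

theorem stmt8 {d : ℕ} (A B : Matrix (Fin d) (Fin d) ℝ)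
    (hA : A.PosDef) (hB : B.PosDef) (hAB : (B - A).PosSemidef) (x : Fin d → ℝ) :
    x ⬝ᵥ (B⁻¹ *ᵥ x) ≤ (B.det / A.det) * (x ⬝ᵥ (A⁻¹ *ᵥ x)) ∧
    Real.sqrt (x ⬝ᵥ (B⁻¹ *ᵥ x)) / Real.sqrt (x ⬝ᵥ (A⁻¹ *ᵥ x))
      ≤ Real.sqrt (B.det / A.det) := by
  classical
  have hdetA : 0 < A.det := hA.det_pos
  have hdetB : 0 < B.det := hB.det_pos
  have huA : IsUnit A.det := isUnit_iff_ne_zero.mpr (ne_of_gt hdetA)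
  have huB : IsUnit B.det := isUnit_iff_ne_zero.mpr (ne_of_gt hdetB)
  set y := B⁻¹ *ᵥ x with hy
  set z := A⁻¹ *ᵥ x with hz
  set qB := x ⬝ᵥ y with hqB
  set qA := x ⬝ᵥ z with hqA
  have hAz : A *ᵥ z = x := by
    rw [hz, mulVec_mulVec, mul_nonsing_inv A huA, one_mulVec]
  have hBy : B *ᵥ y = x := by
    rw [hy, mulVec_mulVec, mul_nonsing_inv B huB, one_mulVec]
  have hstar : ∀ w : Fin d → ℝ, star w = w := fun w => by
    funext i; simp
  have hsym : ∀ u w : Fin d → ℝ, u ⬝ᵥ (A *ᵥ w) = (A *ᵥ u) ⬝ᵥ w := by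
    intro u w
    have hT : Aᵀ = A := by
      rw [← conjTranspose_eq_transpose_of_trivial]; exact hA.1
    rw [dotProduct_mulVec, ← mulVec_transpose, hT]
  have hqA0 : 0 ≤ qA := by
    have := hA.inv.posSemidef.dotProduct_mulVec_nonneg x
    rwa [hstar] at this
  have hqB0 : 0 ≤ qB := by
    have := hB.inv.posSemidef.dotProduct_mulVec_nonneg x
    rwa [hstar] at this
  set c := y ⬝ᵥ (A *ᵥ y) with hc
  have hcqB : c ≤ qB := by
    have h0 := hAB.dotProduct_mulVec_nonneg y
    rw [hstar, sub_mulVec, dotProduct_sub, hBy] at h0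
    have : y ⬝ᵥ x = qB := dotProduct_comm y x
    linarith [h0, this.symm]
  have hquad : ∀ t : ℝ, 0 ≤ qA * (t * t) + (2 * qB) * t + c := by
    intro t
    have h0 := hA.posSemidef.dotProduct_mulVec_nonneg (y + t • z)
    rw [hstar] at h0
    have hexp : (y + t • z) ⬝ᵥ (A *ᵥ (y + t • z))
        = qA * (t * t) + (2 * qB) * t + c := by
      rw [mulVec_add, mulVec_smul, dotProduct_add, add_dotProduct, add_dotProduct,
        dotProduct_smul, smul_dotProduct, smul_dotProduct, dotProduct_smul]
      have h1 : y ⬝ᵥ (A *ᵥ z) = qB := by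
        rw [hAz]; exact (dotProduct_comm y x).trans hqB.symm
      have h2 : z ⬝ᵥ (A *ᵥ y) = qB := by
        rw [hsym, hAz]
      have h3 : z ⬝ᵥ (A *ᵥ z) = qA := by
        rw [hAz]; exact (dotProduct_comm z x).trans hqA.symm
      rw [h1, h2, h3]
      simp [smul_eq_mul]
      ring
    rw [hexp] at h0
    exact h0
  have hdisc : discrim qA (2 * qB) c ≤ 0 := discrim_le_zero hquad
  rw [discrim] at hdisc
  have hkey : qB * qB ≤ qA * c := by nlinarith [hdisc]
  have hBA : qB ≤ qA := by
    rcases eq_or_lt_of_le hqB0 with h | h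
    · linarith
    · nlinarith [hkey, hcqB, h]
  have hdet : A.det ≤ B.det := det_mono_aux A B hA hAB
  have hr1 : 1 ≤ B.det / A.det := (one_le_div hdetA).mpr hdet
  have part1 : qB ≤ (B.det / A.det) * qA := by nlinarith [hBA, hqA0, hr1]
  refine ⟨part1, ?_⟩
  rcases eq_or_lt_of_le hqA0 with h | h
  · -- qA = 0 forces x = 0
    have hx0 : x = 0 := by
      by_contra hx
      have := hA.inv.dotProduct_mulVec_pos hx
      rw [hstar] at this
      have hpos : 0 < qA := by rw [hqA, hz]; exact this
      linarith
    have hqB0' : qB = 0 := by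
      rw [hqB, hy, hx0]; simp
    rw [hqB0', Real.sqrt_zero, zero_div]
    exact Real.sqrt_nonneg _
  · rw [div_le_iff₀ (Real.sqrt_pos.mpr h)]
    rw [← Real.sqrt_mul (by positivity : (0:ℝ) ≤ B.det / A.det)]
    exact Real.sqrt_le_sqrt part1
end

section
/- Let x_1, ..., x_K ∈ ℝ^d with ‖x_k‖₂ ≤ 1, λ ≥ 1, and V_k = λI + ∑_{τ<k} x_τ x_τᵀ. Then ∑_{k=1}^K min(1, x_kᵀ V_k⁻¹ x_k) ≤ 2d log(1 + K/(dλ)) ≤ 2d log(1 + K/λ). -/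
/-!
By the matrix determinant lemma, `det V_{k+1} = det V_k * (1 + x_kᵀ V_k⁻¹ x_k)`, and
`min 1 u ≤ 2 log (1 + u)` for `u ≥ 0`, so the sum telescopes to `2 log (det V_K / det V_0)`.
AM-GM on the eigenvalues bounds `det V_K` by `(tr V_K / d) ^ d ≤ (λ + K / d) ^ d`, while
`det V_0 = λ ^ d`.
-/

open Matrix Finset Real

theorem Real.min_one_le_two_mul_log_one_add {u : ℝ} (hu : 0 ≤ u) :
    min 1 u ≤ 2 * log (1 + u) := by
  have hlog : u / (1 + u) ≤ log (1 + u) := by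
    calc u / (1 + u) = 1 - (1 + u)⁻¹ := by field_simp; ring
      _ ≤ log (1 + u) := one_sub_inv_le_log_of_pos (by positivity)
  have hmin : min 1 u ≤ 2 * (u / (1 + u)) := by
    rw [mul_div_assoc', le_div_iff₀ (by positivity)]
    rcases le_total u 1 with h | h
    · rw [min_eq_right h]; nlinarith
    · rw [min_eq_left h]; linarith
  linarith

theorem Real.prod_le_sum_div_card_pow {ι : Type*} (s : Finset ι) (f : ι → ℝ)
    (hf : ∀ i ∈ s, 0 ≤ f i) : ∏ i ∈ s, f i ≤ ((∑ i ∈ s, f i) / #s) ^ #s := by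
  rcases s.eq_empty_or_nonempty with rfl | hs
  · simp
  have hcard : (0 : ℝ) < #s := by exact_mod_cast hs.card_pos
  have amgm := geom_mean_le_arith_mean_weighted s (fun _ ↦ (#s : ℝ)⁻¹) f
    (fun _ _ ↦ by positivity) (by simp [hcard.ne']) hf
  calc ∏ i ∈ s, f i = (∏ i ∈ s, f i ^ (#s : ℝ)⁻¹) ^ #s := by
        rw [← prod_pow]
        refine prod_congr rfl fun i hi ↦ ?_
        rw [← rpow_natCast, ← rpow_mul (hf i hi), inv_mul_cancel₀ hcard.ne', rpow_one]
    _ ≤ (∑ i ∈ s, (#s : ℝ)⁻¹ * f i) ^ #s := by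
        gcongr
        exact prod_nonneg fun i hi ↦ rpow_nonneg (hf i hi) _
    _ = ((∑ i ∈ s, f i) / #s) ^ #s := by rw [← mul_sum, inv_mul_eq_div]

theorem Matrix.PosSemidef.det_le_trace_div_card_pow {n : Type*} [Fintype n] [DecidableEq n]
    {A : Matrix n n ℝ} (hA : A.PosSemidef) :
    A.det ≤ (A.trace / Fintype.card n) ^ Fintype.card n := by
  rw [hA.isHermitian.det_eq_prod_eigenvalues, hA.isHermitian.trace_eq_sum_eigenvalues]
  simpa using prod_le_sum_div_card_pow univ _ fun i _ ↦ hA.eigenvalues_nonneg i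

theorem Matrix.det_add_vecMulVec {m α : Type*} [Fintype m] [DecidableEq m] [CommRing α]
    {A : Matrix m m α} (hA : IsUnit A.det) (u v : m → α) :
    (A + vecMulVec u v).det = A.det * (1 + v ⬝ᵥ (A⁻¹ *ᵥ u)) := by
  rw [vecMulVec_eq Unit, det_add_replicateCol_mul_replicateRow hA, det_unique (n := Unit),
    dotProduct_mulVec]
  simp [mul_apply, dotProduct, vecMul, sum_mul]

theorem Matrix.trace_smul_one_add_sum_vecMulVec_le {n : Type*} [Fintype n] [DecidableEq n]
    (lam : ℝ) {x : ℕ → n → ℝ} (hx : ∀ k, x k ⬝ᵥ x k ≤ 1) (K : ℕ) :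
    (lam • 1 + ∑ τ ∈ range K, vecMulVec (x τ) (x τ)).trace ≤ Fintype.card n * lam + K := by
  rw [trace_add, trace_smul, trace_one, trace_sum, smul_eq_mul, mul_comm]
  gcongr
  simpa [trace_vecMulVec] using sum_le_sum fun k (_ : k ∈ range K) ↦ hx k

section EllipticalPotential

variable {n : Type*} [Fintype n] {V : ℕ → Matrix n n ℝ} {x : ℕ → n → ℝ}

theorem posDef_of_succ_eq_add_vecMulVec (h0 : (V 0).PosDef)
    (hsucc : ∀ k, V (k + 1) = V k + vecMulVec (x k) (x k)) (k : ℕ) : (V k).PosDef := by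
  induction k with
  | zero => exact h0
  | succ k ih =>
    rw [hsucc]
    simpa using ih.add_posSemidef (posSemidef_vecMulVec_self_star (x k))

theorem sum_min_one_le_two_mul_log_det_sub [DecidableEq n] (h0 : (V 0).PosDef)
    (hsucc : ∀ k, V (k + 1) = V k + vecMulVec (x k) (x k)) (K : ℕ) :
    ∑ k ∈ range K, min 1 (x k ⬝ᵥ ((V k)⁻¹ *ᵥ x k))
      ≤ 2 * (log (V K).det - log (V 0).det) := by
  have hpd := posDef_of_succ_eq_add_vecMulVec h0 hsucc
  have hquad (k : ℕ) : 0 ≤ x k ⬝ᵥ ((V k)⁻¹ *ᵥ x k) := by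
    simpa using (hpd k).inv.posSemidef.dotProduct_mulVec_nonneg (x k)
  have hlog_det (k : ℕ) : log (V (k + 1)).det
      = log (V k).det + log (1 + x k ⬝ᵥ ((V k)⁻¹ *ᵥ x k)) := by
    rw [hsucc, det_add_vecMulVec (hpd k).det_pos.ne'.isUnit,
      log_mul (hpd k).det_pos.ne' (by linarith [hquad k])]
  calc ∑ k ∈ range K, min 1 (x k ⬝ᵥ ((V k)⁻¹ *ᵥ x k))
      ≤ ∑ k ∈ range K, 2 * (log (V (k + 1)).det - log (V k).det) := by
        refine sum_le_sum fun k _ ↦ ?_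
        rw [hlog_det]
        linarith [min_one_le_two_mul_log_one_add (hquad k)]
    _ = 2 * (log (V K).det - log (V 0).det) := by
        rw [← mul_sum, sum_range_sub (fun k ↦ log (V k).det)]

end EllipticalPotential

theorem stmt12 (d K : ℕ) (hd : 0 < d) (lam : ℝ) (hlam : 1 ≤ lam)
    (x : ℕ → Fin d → ℝ) (hx : ∀ k, x k ⬝ᵥ x k ≤ 1)
    (V : ℕ → Matrix (Fin d) (Fin d) ℝ)
    (hV : ∀ k, V k =
      lam • (1 : Matrix (Fin d) (Fin d) ℝ) + ∑ τ ∈ Finset.range k, vecMulVec (x τ) (x τ)) :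
    ∑ k ∈ Finset.range K, min 1 (x k ⬝ᵥ ((V k)⁻¹ *ᵥ x k))
      ≤ 2 * d * Real.log (1 + K / (d * lam)) ∧
    2 * d * Real.log (1 + K / (d * lam)) ≤ 2 * d * Real.log (1 + K / lam) := by
  have hlam0 : 0 < lam := by linarith
  have hV0 : V 0 = lam • 1 := by simpa using hV 0
  have h0 : (V 0).PosDef := hV0 ▸ PosDef.one.smul hlam0
  have hsucc (k : ℕ) : V (k + 1) = V k + vecMulVec (x k) (x k) := by
    rw [hV, hV, sum_range_succ, add_assoc]
  have hpdK := posDef_of_succ_eq_add_vecMulVec h0 hsucc K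
  have hdetK : (V K).det ≤ (lam * (1 + K / (d * lam))) ^ d :=
    calc (V K).det ≤ ((V K).trace / d) ^ d := by
          simpa using hpdK.posSemidef.det_le_trace_div_card_pow
      _ ≤ ((d * lam + K) / d) ^ d := by
          gcongr
          · exact div_nonneg hpdK.posSemidef.trace_nonneg d.cast_nonneg
          · simpa only [hV, Fintype.card_fin] using trace_smul_one_add_sum_vecMulVec_le lam hx K
      _ = (lam * (1 + K / (d * lam))) ^ d := by field_simp
  have hdet0 : (V 0).det = lam ^ d := by simp [hV0]
  refine ⟨?_, ?_⟩
  · calc _ ≤ 2 * (log (V K).det - log (V 0).det) := sum_min_one_le_two_mul_log_det_sub h0 hsucc K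
      _ ≤ 2 * (log ((lam * (1 + K / (d * lam))) ^ d) - log (lam ^ d)) := by
          rw [hdet0]
          gcongr
          exact hpdK.det_pos
      _ = 2 * d * log (1 + K / (d * lam)) := by
          rw [log_pow, log_pow, log_mul hlam0.ne' (by positivity)]
          ring
  · have hd1 : (1 : ℝ) ≤ d := by exact_mod_cast hd
    gcongr
    exact le_mul_of_one_le_left hlam0.le hd1
end

section
/- Let P and P̂ be probability distributions on a finite set S with ‖P̂ − P‖₁ ≤ ε, and V, V̄, V_ : S → [0, H] functions with V_ ≤ V ≤ V̄ pointwise. Then |Var_{s∼P̂}[(V̄+V_)/2] − Var_{s∼P}[V]| ≤ 4H·E_{s∼P}[V̄ − V_] + 3H²ε. -/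
theorem stmt13 (S : Type*) [Fintype S] (P Q : S → ℝ) (H ε : ℝ) (hH : 0 ≤ H) (hε : 0 ≤ ε)
    (hPpos : ∀ s, 0 ≤ P s) (hPsum : ∑ s, P s = 1)
    (hQpos : ∀ s, 0 ≤ Q s) (hQsum : ∑ s, Q s = 1)
    (V Vbar Vlow : S → ℝ)
    (hrange : ∀ s, 0 ≤ Vlow s ∧ Vlow s ≤ V s ∧ V s ≤ Vbar s ∧ Vbar s ≤ H)
    (hl1 : ∑ s, |Q s - P s| ≤ ε) :
    |(∑ s, Q s * ((Vbar s + Vlow s) / 2) ^ 2 - (∑ s, Q s * ((Vbar s + Vlow s) / 2)) ^ 2)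
        - (∑ s, P s * V s ^ 2 - (∑ s, P s * V s) ^ 2)|
      ≤ 4 * H * (∑ s, P s * (Vbar s - Vlow s)) + 3 * H ^ 2 * ε := by
  set M : S → ℝ := fun s => (Vbar s + Vlow s) / 2 with hM
  have hMrange : ∀ s, 0 ≤ M s ∧ M s ≤ H := by
    intro s
    obtain ⟨h1, h2, h3, h4⟩ := hrange s
    constructor <;> simp only [hM] <;> nlinarith
  set D : ℝ := ∑ s, P s * (Vbar s - Vlow s) with hD
  have hDpos : 0 ≤ D := by
    apply Finset.sum_nonneg
    intro s _
    obtain ⟨h1, h2, h3, h4⟩ := hrange s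
    have := hPpos s; nlinarith
  -- bounds on means
  have hy : 0 ≤ ∑ s, P s * M s ∧ ∑ s, P s * M s ≤ H := by
    constructor
    · exact Finset.sum_nonneg fun s _ => mul_nonneg (hPpos s) (hMrange s).1
    · calc ∑ s, P s * M s ≤ ∑ s, P s * H :=
            Finset.sum_le_sum fun s _ => mul_le_mul_of_nonneg_left (hMrange s).2 (hPpos s)
        _ = H := by rw [← Finset.sum_mul, hPsum, one_mul]
  have hx : 0 ≤ ∑ s, Q s * M s ∧ ∑ s, Q s * M s ≤ H := by
    constructor
    · exact Finset.sum_nonneg fun s _ => mul_nonneg (hQpos s) (hMrange s).1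
    · calc ∑ s, Q s * M s ≤ ∑ s, Q s * H :=
            Finset.sum_le_sum fun s _ => mul_le_mul_of_nonneg_left (hMrange s).2 (hQpos s)
        _ = H := by rw [← Finset.sum_mul, hQsum, one_mul]
  have hz : 0 ≤ ∑ s, P s * V s ∧ ∑ s, P s * V s ≤ H := by
    constructor
    · exact Finset.sum_nonneg fun s _ => mul_nonneg (hPpos s)
        (le_trans (hrange s).1 (hrange s).2.1)
    · calc ∑ s, P s * V s ≤ ∑ s, P s * H :=
            Finset.sum_le_sum fun s _ => mul_le_mul_of_nonneg_left
              (le_trans (hrange s).2.2.1 (hrange s).2.2.2) (hPpos s)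
        _ = H := by rw [← Finset.sum_mul, hPsum, one_mul]
  -- |∑ Q M² - ∑ P M²| ≤ H² ε
  have h1 : |∑ s, Q s * M s ^ 2 - ∑ s, P s * M s ^ 2| ≤ H ^ 2 * ε := by
    have : ∑ s, Q s * M s ^ 2 - ∑ s, P s * M s ^ 2 = ∑ s, (Q s - P s) * M s ^ 2 := by
      rw [← Finset.sum_sub_distrib]; exact Finset.sum_congr rfl fun s _ => by ring
    rw [this]
    calc |∑ s, (Q s - P s) * M s ^ 2| ≤ ∑ s, |(Q s - P s) * M s ^ 2| :=
          Finset.abs_sum_le_sum_abs _ _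
      _ ≤ ∑ s, |Q s - P s| * H ^ 2 := by
          apply Finset.sum_le_sum
          intro s _
          rw [abs_mul]
          apply mul_le_mul_of_nonneg_left _ (abs_nonneg _)
          rw [abs_of_nonneg (sq_nonneg _)]
          exact pow_le_pow_left₀ (hMrange s).1 (hMrange s).2 2
      _ = (∑ s, |Q s - P s|) * H ^ 2 := by rw [Finset.sum_mul]
      _ ≤ ε * H ^ 2 := mul_le_mul_of_nonneg_right hl1 (sq_nonneg _)
      _ = H ^ 2 * ε := by ring
  -- |∑ Q M - ∑ P M| ≤ H ε
  have h2 : |∑ s, Q s * M s - ∑ s, P s * M s| ≤ H * ε := by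
    have : ∑ s, Q s * M s - ∑ s, P s * M s = ∑ s, (Q s - P s) * M s := by
      rw [← Finset.sum_sub_distrib]; exact Finset.sum_congr rfl fun s _ => by ring
    rw [this]
    calc |∑ s, (Q s - P s) * M s| ≤ ∑ s, |(Q s - P s) * M s| :=
          Finset.abs_sum_le_sum_abs _ _
      _ ≤ ∑ s, |Q s - P s| * H := by
          apply Finset.sum_le_sum
          intro s _
          rw [abs_mul]
          exact mul_le_mul_of_nonneg_left
            (by rw [abs_of_nonneg (hMrange s).1]; exact (hMrange s).2) (abs_nonneg _)
      _ = (∑ s, |Q s - P s|) * H := by rw [Finset.sum_mul]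
      _ ≤ ε * H := mul_le_mul_of_nonneg_right hl1 hH
      _ = H * ε := by ring
  -- |∑ P M² - ∑ P V²| ≤ H D
  have h3 : |∑ s, P s * M s ^ 2 - ∑ s, P s * V s ^ 2| ≤ H * D := by
    have : ∑ s, P s * M s ^ 2 - ∑ s, P s * V s ^ 2
        = ∑ s, P s * (M s ^ 2 - V s ^ 2) := by
      rw [← Finset.sum_sub_distrib]; exact Finset.sum_congr rfl fun s _ => by ring
    rw [this, hD, Finset.mul_sum]
    calc |∑ s, P s * (M s ^ 2 - V s ^ 2)| ≤ ∑ s, |P s * (M s ^ 2 - V s ^ 2)| :=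
          Finset.abs_sum_le_sum_abs _ _
      _ ≤ ∑ s, H * (P s * (Vbar s - Vlow s)) := by
          apply Finset.sum_le_sum
          intro s _
          rw [abs_mul, abs_of_nonneg (hPpos s)]
          obtain ⟨g1, g2, g3, g4⟩ := hrange s
          have hPs := hPpos s
          have habs : |M s ^ 2 - V s ^ 2| ≤ H * (Vbar s - Vlow s) := by
            rw [abs_le]
            constructor <;> simp only [hM] <;> nlinarith
          nlinarith [abs_nonneg (M s ^ 2 - V s ^ 2)]
  -- |∑ P M - ∑ P V| ≤ D / 2
  have h4 : |∑ s, P s * M s - ∑ s, P s * V s| ≤ D / 2 := by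
    have he : ∑ s, P s * M s - ∑ s, P s * V s = ∑ s, P s * (M s - V s) := by
      rw [← Finset.sum_sub_distrib]; exact Finset.sum_congr rfl fun s _ => by ring
    have hD2 : D / 2 = ∑ s, P s * ((Vbar s - Vlow s) / 2) := by
      rw [hD, Finset.sum_div]; congr 1; ext s; ring
    rw [he, hD2]
    calc |∑ s, P s * (M s - V s)| ≤ ∑ s, |P s * (M s - V s)| :=
          Finset.abs_sum_le_sum_abs _ _
      _ ≤ ∑ s, P s * ((Vbar s - Vlow s) / 2) := by
          apply Finset.sum_le_sum
          intro s _
          rw [abs_mul, abs_of_nonneg (hPpos s)]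
          apply mul_le_mul_of_nonneg_left _ (hPpos s)
          rw [abs_le]
          obtain ⟨g1, g2, g3, g4⟩ := hrange s
          constructor <;> simp only [hM] <;> nlinarith
  have hxy : |(∑ s, Q s * M s) ^ 2 - (∑ s, P s * M s) ^ 2| ≤ 2 * (H ^ 2 * ε) := by
    have he : (∑ s, Q s * M s) ^ 2 - (∑ s, P s * M s) ^ 2
        = (∑ s, Q s * M s - ∑ s, P s * M s) * (∑ s, Q s * M s + ∑ s, P s * M s) := by ring
    rw [he, abs_mul]
    have h' : |∑ s, Q s * M s + ∑ s, P s * M s| ≤ 2 * H :=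
      abs_le.mpr ⟨by linarith [hx.1, hy.1, hH], by linarith [hx.2, hy.2]⟩
    calc |∑ s, Q s * M s - ∑ s, P s * M s| * |∑ s, Q s * M s + ∑ s, P s * M s|
        ≤ (H * ε) * (2 * H) :=
          mul_le_mul h2 h' (abs_nonneg _) (by positivity)
      _ = 2 * (H ^ 2 * ε) := by ring
  have hyz : |(∑ s, P s * M s) ^ 2 - (∑ s, P s * V s) ^ 2| ≤ H * D := by
    have he : (∑ s, P s * M s) ^ 2 - (∑ s, P s * V s) ^ 2
        = (∑ s, P s * M s - ∑ s, P s * V s) * (∑ s, P s * M s + ∑ s, P s * V s) := by ring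
    rw [he, abs_mul]
    have h' : |∑ s, P s * M s + ∑ s, P s * V s| ≤ 2 * H :=
      abs_le.mpr ⟨by linarith [hy.1, hz.1, hH], by linarith [hy.2, hz.2]⟩
    calc |∑ s, P s * M s - ∑ s, P s * V s| * |∑ s, P s * M s + ∑ s, P s * V s|
        ≤ (D / 2) * (2 * H) :=
          mul_le_mul h4 h' (abs_nonneg _) (by positivity)
      _ = H * D := by ring
  show |(∑ s, Q s * M s ^ 2 - (∑ s, Q s * M s) ^ 2)
      - (∑ s, P s * V s ^ 2 - (∑ s, P s * V s) ^ 2)|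
      ≤ 4 * H * D + 3 * H ^ 2 * ε
  rw [abs_le] at h1 h3 hxy hyz ⊢
  have hHD : 0 ≤ H * D := mul_nonneg hH hDpos
  constructor
  · linarith [h1.1, h3.1, hxy.2, hyz.2]
  · linarith [h1.2, h3.2, hxy.1, hyz.1]
end
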